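/- arXiv:2305.15278 — 3 statements merged into one kernel-verified Lean document; each statement's English description precedes it below -/
import Mathlib

section
/- Multiplication lemma: let B > b > 1, f ∈ k_B and g ∈ k_b. Then fg ∈ k_b and ‖fg‖_{k_b} ≤ √((B+b)/(B−b)) · ‖f‖_{k_B} · ‖g‖_{k_b}. -/
open MeasureTheory Complex Real
open scoped ComplexConjugate

lemma tsum_cs {ι : Type*} {a e : ι → ℝ} (ha : ∀ i, 0 ≤ a i) (he : ∀ i, 0 ≤ e i)
    (h1 : Summable fun i => a i ^ 2) (h2 : Summable fun i => e i ^ 2) :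
    Summable (fun i => a i * e i) ∧
      ∑' i, a i * e i ≤ Real.sqrt (∑' i, a i ^ 2) * Real.sqrt (∑' i, e i ^ 2) := by
  have hs : Summable fun i => a i * e i := by
    refine Summable.of_nonneg_of_le (fun i => mul_nonneg (ha i) (he i))
      (fun i => ?_) ((h1.add h2).mul_left (1/2))
    nlinarith [sq_nonneg (a i - e i)]
  refine ⟨hs, hs.tsum_le_of_sum_le fun s => ?_⟩
  have h := Finset.sum_mul_sq_le_sq_mul_sq s a e
  have hle1 : ∑ i ∈ s, a i ^ 2 ≤ ∑' i, a i ^ 2 := Summable.sum_le_tsum s (fun i _ => sq_nonneg _) h1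
  have hle2 : ∑ i ∈ s, e i ^ 2 ≤ ∑' i, e i ^ 2 := Summable.sum_le_tsum s (fun i _ => sq_nonneg _) h2
  have hnn : (0:ℝ) ≤ ∑ i ∈ s, a i * e i :=
    Finset.sum_nonneg fun i _ => mul_nonneg (ha i) (he i)
  rw [← Real.sqrt_mul (tsum_nonneg fun i => sq_nonneg _)]
  rw [Real.le_sqrt hnn]
  calc (∑ i ∈ s, a i * e i) ^ 2 ≤ (∑ i ∈ s, a i ^ 2) * ∑ i ∈ s, e i ^ 2 := h
    _ ≤ (∑' i, a i ^ 2) * ∑' i, e i ^ 2 := by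
        apply mul_le_mul hle1 hle2 (Finset.sum_nonneg fun i _ => sq_nonneg _)
          (tsum_nonneg fun i => sq_nonneg _)
  exact mul_nonneg (tsum_nonneg fun i => sq_nonneg _) (tsum_nonneg fun i => sq_nonneg _)

lemma hasSum_geometric_int {t : ℝ} (h0 : 0 ≤ t) (h1 : t < 1) :
    HasSum (fun n : ℤ => t ^ n.natAbs) ((1 + t) / (1 - t)) := by
  have hpos : HasSum (fun n : ℕ => t ^ ((n : ℤ).natAbs)) (1 - t)⁻¹ := by
    have h := hasSum_geometric_of_lt_one h0 h1
    convert h using 2 with n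
    simp
  have hneg : HasSum (fun n : ℕ => t ^ ((-((n : ℤ) + 1)).natAbs)) (t * (1 - t)⁻¹) := by
    have h := (hasSum_geometric_of_lt_one h0 h1).mul_left t
    have hext : (fun n : ℕ => t ^ ((-((n : ℤ) + 1)).natAbs)) = fun n : ℕ => t * t ^ n := by
      funext n
      have hna : (-((n : ℤ) + 1)).natAbs = n + 1 := by omega
      rw [hna, pow_succ]; ring
    rw [hext]; exact h
  have h := HasSum.of_nat_of_neg_add_one (f := fun n : ℤ => t ^ n.natAbs) hpos hneg
  have heq : (1 - t)⁻¹ + t * (1 - t)⁻¹ = (1 + t) / (1 - t) := by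
    have ht : (1:ℝ) - t ≠ 0 := by linarith
    field_simp
  rwa [heq] at h
open scoped ComplexConjugate

lemma fourierCoeff_congr_ae' {T : ℝ} [hT : Fact (0 < T)] {f g : AddCircle T → ℂ}
    (h : f =ᵐ[AddCircle.haarAddCircle] g) (n : ℤ) : fourierCoeff f n = fourierCoeff g n := by
  unfold fourierCoeff
  refine integral_congr_ae ?_
  filter_upwards [h] with x hx
  rw [hx]

lemma hasSum_fourierCoeff_mul {T : ℝ} [hT : Fact (0 < T)] {f g : AddCircle T → ℂ}
    (hf2 : MemLp f 2 AddCircle.haarAddCircle) (hg2 : MemLp g 2 AddCircle.haarAddCircle) (n : ℤ) :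
    HasSum (fun m : ℤ => fourierCoeff f m * fourierCoeff g (n - m)) (fourierCoeff (f * g) n) := by
  set μ := @AddCircle.haarAddCircle T hT with hμ
  set F : AddCircle T → ℂ := fun x => conj (f x) with hFdef
  set G : AddCircle T → ℂ := fun x => g x * fourier (-n) x with hGdef
  have hnorm_fourier : ∀ (k : ℤ) (x : AddCircle T), ‖fourier k x‖ = 1 := by
    intro k x
    rw [fourier_apply]
    exact Circle.norm_coe _
  have hF2 : MemLp F 2 μ := by
    refine MemLp.of_le hf2
      (RCLike.continuous_conj.comp_aestronglyMeasurable hf2.aestronglyMeasurable) ?_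
    filter_upwards with x
    simp [F]
  have hG2 : MemLp G 2 μ := by
    refine MemLp.of_le hg2
      (hg2.aestronglyMeasurable.mul (map_continuous (fourier (-n))).aestronglyMeasurable) ?_
    filter_upwards with x
    simp [G, hnorm_fourier, Circle.norm_coe]
  have key := fourierBasis.hasSum_inner_mul_inner (hF2.toLp F) (hG2.toLp G)
  -- first factor
  have h1 : ∀ m : ℤ, (inner ℂ (hF2.toLp F) (fourierBasis (T := T) m) : ℂ)
      = fourierCoeff f (-m) := by
    intro m
    rw [← inner_conj_symm, ← fourierBasis.repr_apply_apply, fourierBasis_repr]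
    have e1 : fourierCoeff (↑(hF2.toLp F)) m = fourierCoeff F m :=
      fourierCoeff_congr_ae' (hF2.coeFn_toLp) m
    rw [e1]
    have e2 : fourierCoeff F m = conj (fourierCoeff f (-m)) := by
      unfold fourierCoeff
      rw [← integral_conj]
      refine integral_congr_ae (Filter.Eventually.of_forall fun x => ?_)
      simp only [F, smul_eq_mul, map_mul, neg_neg]
      rw [← fourier_neg]
    rw [e2, Complex.conj_conj]
  -- second factor
  have h2 : ∀ m : ℤ, (inner ℂ (fourierBasis (T := T) m) (hG2.toLp G) : ℂ)
      = fourierCoeff g (m + n) := by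
    intro m
    rw [← fourierBasis.repr_apply_apply, fourierBasis_repr]
    have e1 : fourierCoeff (↑(hG2.toLp G)) m = fourierCoeff G m :=
      fourierCoeff_congr_ae' (hG2.coeFn_toLp) m
    rw [e1]
    unfold fourierCoeff
    refine integral_congr_ae (Filter.Eventually.of_forall fun x => ?_)
    simp only [G, smul_eq_mul]
    rw [show -(m + n) = -m + -n by ring, fourier_add]
    ring
  -- inner product
  have h3 : (inner ℂ (hF2.toLp F) (hG2.toLp G) : ℂ) = fourierCoeff (f * g) n := by
    rw [MeasureTheory.L2.inner_def]
    unfold fourierCoeff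
    refine integral_congr_ae ?_
    filter_upwards [hF2.coeFn_toLp, hG2.coeFn_toLp] with x hFx hGx
    rw [hFx, hGx]
    simp only [F, G, RCLike.inner_apply, Complex.conj_conj, smul_eq_mul, Pi.mul_apply]
    ring
  rw [h3] at key
  simp_rw [h1, h2] at key
  have key2 := ((Equiv.neg ℤ).hasSum_iff).mpr key
  have hext : ((fun m : ℤ => fourierCoeff f (-m) * fourierCoeff g (m + n)) ∘ (Equiv.neg ℤ))
      = fun m : ℤ => fourierCoeff f m * fourierCoeff g (n - m) := by
    funext m
    simp only [Function.comp_apply, Equiv.neg_apply, neg_neg]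
    rw [show -m + n = n - m by ring]
  rwa [hext] at key2

set_option maxHeartbeats 2000000 in
/-- Multiplication lemma: for `B > b > 1`, `f ∈ k_B`, `g ∈ k_b`, the pointwise product
satisfies `fg ∈ k_b` with `‖fg‖_{k_b} ≤ √((B+b)/(B-b)) ‖f‖_{k_B} ‖g‖_{k_b}`. -/
theorem kb_multiplication (B b : ℝ) (hb : 1 < b) (hB : b < B)
    (f g : AddCircle (1:ℝ) → ℂ)
    (hf2 : MemLp f 2 (@AddCircle.haarAddCircle (1:ℝ) ⟨one_pos⟩))
    (hg2 : MemLp g 2 (@AddCircle.haarAddCircle (1:ℝ) ⟨one_pos⟩))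
    (hf : Summable fun n : ℤ => B ^ n.natAbs * ‖fourierCoeff f n‖ ^ 2)
    (hg : Summable fun n : ℤ => b ^ n.natAbs * ‖fourierCoeff g n‖ ^ 2) :
    (Summable fun n : ℤ => b ^ n.natAbs * ‖fourierCoeff (f * g) n‖ ^ 2) ∧
    Real.sqrt (∑' n : ℤ, b ^ n.natAbs * ‖fourierCoeff (f * g) n‖ ^ 2) ≤
      Real.sqrt ((B + b) / (B - b)) *
        Real.sqrt (∑' n : ℤ, B ^ n.natAbs * ‖fourierCoeff f n‖ ^ 2) *
        Real.sqrt (∑' n : ℤ, b ^ n.natAbs * ‖fourierCoeff g n‖ ^ 2) := by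
  haveI : Fact ((0:ℝ) < 1) := ⟨one_pos⟩
  have hb0 : (0:ℝ) < b := lt_trans one_pos hb
  have hB0 : (0:ℝ) < B := lt_trans hb0 hB
  have hb1 : (1:ℝ) ≤ b := le_of_lt hb
  have hBb : (0:ℝ) < B - b := by linarith
  set a : ℤ → ℝ := fun m => Real.sqrt (B ^ m.natAbs) * ‖fourierCoeff f m‖ with ha_def
  set e : ℤ → ℝ := fun m => Real.sqrt (b ^ m.natAbs) * ‖fourierCoeff g m‖ with he_def
  set ρ : ℤ → ℝ := fun m => Real.sqrt ((b / B) ^ m.natAbs) with hρ_def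
  have ha_nn : ∀ m, 0 ≤ a m := fun m => mul_nonneg (Real.sqrt_nonneg _) (norm_nonneg _)
  have he_nn : ∀ m, 0 ≤ e m := fun m => mul_nonneg (Real.sqrt_nonneg _) (norm_nonneg _)
  have hρ_nn : ∀ m, 0 ≤ ρ m := fun m => Real.sqrt_nonneg _
  have ha_sq : ∀ m, a m ^ 2 = B ^ m.natAbs * ‖fourierCoeff f m‖ ^ 2 := by
    intro m; rw [mul_pow, Real.sq_sqrt (pow_nonneg hB0.le _)]
  have he_sq : ∀ m, e m ^ 2 = b ^ m.natAbs * ‖fourierCoeff g m‖ ^ 2 := by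
    intro m; rw [mul_pow, Real.sq_sqrt (pow_nonneg hb0.le _)]
  have ht0 : 0 ≤ b / B := by positivity
  have ht1 : b / B < 1 := (div_lt_one hB0).mpr hB
  have hρ_sq : ∀ m, ρ m ^ 2 = (b / B) ^ m.natAbs := fun m =>
    Real.sq_sqrt (pow_nonneg ht0 _)
  have ha2 : Summable (fun m => a m ^ 2) := hf.congr fun m => (ha_sq m).symm
  have he2 : Summable (fun m => e m ^ 2) := hg.congr fun m => (he_sq m).symm
  have hρ2 : HasSum (fun m => ρ m ^ 2) ((B + b) / (B - b)) := by
    have h := hasSum_geometric_int ht0 ht1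
    have heq : (1 + b / B) / (1 - b / B) = (B + b) / (B - b) := by
      have hBne : B ≠ 0 := hB0.ne'
      have h1 : (1:ℝ) - b / B ≠ 0 := by
        have : (0:ℝ) < 1 - b / B := by linarith
        exact this.ne'
      field_simp
    rw [← heq]
    exact HasSum.congr_fun h fun m => (hρ_sq m)
  set K : ℝ := (B + b) / (B - b) with hK_def
  have hK_nn : 0 ≤ K := le_of_lt (div_pos (by linarith) hBb)
  set Sf : ℝ := ∑' n : ℤ, B ^ n.natAbs * ‖fourierCoeff f n‖ ^ 2 with hSf_def
  set Sg : ℝ := ∑' n : ℤ, b ^ n.natAbs * ‖fourierCoeff g n‖ ^ 2 with hSg_def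
  have hSf_eq : ∑' m, a m ^ 2 = Sf := tsum_congr ha_sq
  have hSg_eq : ∑' m, e m ^ 2 = Sg := tsum_congr he_sq
  have hSf_nn : 0 ≤ Sf := by
    rw [← hSf_eq]; exact tsum_nonneg fun m => sq_nonneg _
  have hSg_nn : 0 ≤ Sg := by
    rw [← hSg_eq]; exact tsum_nonneg fun m => sq_nonneg _
  -- the quantity P = ∑ ρ a
  have hρa := tsum_cs hρ_nn ha_nn hρ2.summable ha2
  set P : ℝ := ∑' m, ρ m * a m with hP_def
  have hP_nn : 0 ≤ P := tsum_nonneg fun m => mul_nonneg (hρ_nn m) (ha_nn m)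
  have hP_le : P ≤ Real.sqrt K * Real.sqrt Sf := by
    have h := hρa.2
    rwa [hρ2.tsum_eq, hSf_eq] at h
  -- shifted summability of e²
  have he2_shift : ∀ k : ℤ, Summable (fun m : ℤ => e (k - m) ^ 2) := fun k =>
    ((Equiv.subLeft k).summable_iff).mpr he2
  have he2_shift' : ∀ m : ℤ, Summable (fun k : ℤ => e (k - m) ^ 2) := fun m =>
    ((Equiv.subRight m).summable_iff).mpr he2
  have he2_shift_tsum : ∀ m : ℤ, ∑' k : ℤ, e (k - m) ^ 2 = Sg := by
    intro m
    rw [← hSg_eq]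
    exact (Equiv.subRight m).tsum_eq fun k => e k ^ 2
  have hρa_le_P : ∀ m, ρ m * a m ≤ P :=
    fun m => Summable.le_tsum hρa.1 m fun k _ => mul_nonneg (hρ_nn k) (ha_nn k)
  -- T n
  have hT_sum : ∀ n : ℤ, Summable (fun m => ρ m * a m * e (n - m) ^ 2) := by
    intro n
    refine Summable.of_nonneg_of_le (fun m => by positivity) (fun m => ?_)
      ((he2_shift n).mul_left P)
    exact mul_le_mul_of_nonneg_right (hρa_le_P m) (sq_nonneg _)
  set Tn : ℤ → ℝ := fun n => ∑' m, ρ m * a m * e (n - m) ^ 2 with hTn_def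
  have hTn_nn : ∀ n, 0 ≤ Tn n := fun n => tsum_nonneg fun m => by positivity
  -- refined Cauchy–Schwarz for each n
  have hS_props : ∀ n : ℤ, Summable (fun m => ρ m * a m * e (n - m)) ∧
      (∑' m, ρ m * a m * e (n - m)) ^ 2 ≤ P * Tn n := by
    intro n
    have h1 : Summable (fun m => Real.sqrt (ρ m * a m) ^ 2) :=
      hρa.1.congr fun m => (Real.sq_sqrt (mul_nonneg (hρ_nn m) (ha_nn m))).symm
    have h2 : Summable (fun m => (Real.sqrt (ρ m * a m) * e (n - m)) ^ 2) := by
      refine (hT_sum n).congr fun m => ?_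
      symm
      rw [mul_pow, Real.sq_sqrt (mul_nonneg (hρ_nn m) (ha_nn m))]
    have hcs := tsum_cs (fun m => Real.sqrt_nonneg _)
      (fun m => mul_nonneg (Real.sqrt_nonneg _) (he_nn _)) h1 h2
    have hext : ∀ m, Real.sqrt (ρ m * a m) * (Real.sqrt (ρ m * a m) * e (n - m))
        = ρ m * a m * e (n - m) := by
      intro m
      rw [← mul_assoc, Real.mul_self_sqrt (mul_nonneg (hρ_nn m) (ha_nn m))]
    constructor
    · exact hcs.1.congr hext
    · have hb2 := hcs.2
      have h3 : ∑' i : ℤ, Real.sqrt (ρ i * a i) ^ 2 = ∑' m : ℤ, ρ m * a m :=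
        tsum_congr fun m => Real.sq_sqrt (mul_nonneg (hρ_nn m) (ha_nn m))
      have h4 : ∑' i : ℤ, (Real.sqrt (ρ i * a i) * e (n - i)) ^ 2 = Tn n := by
        refine tsum_congr fun m => ?_
        rw [mul_pow, Real.sq_sqrt (mul_nonneg (hρ_nn m) (ha_nn m))]
      rw [tsum_congr hext, h3, h4, ← hP_def] at hb2
      calc (∑' m, ρ m * a m * e (n - m)) ^ 2
          ≤ (Real.sqrt P * Real.sqrt (Tn n)) ^ 2 := by
            refine pow_le_pow_left₀ (tsum_nonneg fun m => by positivity) ?_ 2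
            exact hb2
        _ = P * Tn n := by
            rw [mul_pow, Real.sq_sqrt hP_nn, Real.sq_sqrt (hTn_nn n)]
  -- pointwise bound on the Fourier coefficients of the product
  have hbound : ∀ n : ℤ, Real.sqrt (b ^ n.natAbs) * ‖fourierCoeff (f * g) n‖ ≤
      ∑' m, ρ m * a m * e (n - m) := by
    intro n
    have hconv := hasSum_fourierCoeff_mul hf2 hg2 n
    have hfn2 : Summable (fun m => ‖fourierCoeff f m‖ ^ 2) := by
      refine Summable.of_nonneg_of_le (fun m => sq_nonneg _) (fun m => ?_) hf
      have h1 : (1:ℝ) ≤ B ^ m.natAbs := one_le_pow₀ (by linarith)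
      nlinarith [sq_nonneg ‖fourierCoeff f m‖]
    have hgn2base : Summable (fun m => ‖fourierCoeff g m‖ ^ 2) := by
      refine Summable.of_nonneg_of_le (fun m => sq_nonneg _) (fun m => ?_) hg
      have h1 : (1:ℝ) ≤ b ^ m.natAbs := one_le_pow₀ hb1
      nlinarith [sq_nonneg ‖fourierCoeff g m‖]
    have hgn2 : Summable (fun m : ℤ => ‖fourierCoeff g (n - m)‖ ^ 2) :=
      ((Equiv.subLeft n).summable_iff).mpr hgn2base
    have hcs := tsum_cs (fun m => norm_nonneg (fourierCoeff f m))
      (fun m : ℤ => norm_nonneg (fourierCoeff g (n - m))) hfn2 hgn2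
    have hnormsum : Summable (fun m : ℤ => ‖fourierCoeff f m * fourierCoeff g (n - m)‖) :=
      hcs.1.congr fun m => (norm_mul _ _).symm
    have h1 : ‖fourierCoeff (f * g) n‖ ≤
        ∑' m : ℤ, ‖fourierCoeff f m‖ * ‖fourierCoeff g (n - m)‖ := by
      rw [← hconv.tsum_eq]
      refine le_trans (norm_tsum_le_tsum_norm ?_) (le_of_eq (tsum_congr fun m => norm_mul _ _))
      exact hnormsum
    have hterm : ∀ m : ℤ, Real.sqrt (b ^ n.natAbs) *
        (‖fourierCoeff f m‖ * ‖fourierCoeff g (n - m)‖) ≤ ρ m * a m * e (n - m) := by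
      intro m
      have hρa_eq : ρ m * a m = Real.sqrt (b ^ m.natAbs) * ‖fourierCoeff f m‖ := by
        rw [hρ_def, ha_def, ← mul_assoc, ← Real.sqrt_mul (pow_nonneg ht0 _)]
        congr 2
        rw [div_pow, div_mul_cancel₀ _ (pow_ne_zero _ hB0.ne')]
      have hkey : Real.sqrt (b ^ n.natAbs) ≤
          Real.sqrt (b ^ m.natAbs) * Real.sqrt (b ^ (n - m).natAbs) := by
        rw [← Real.sqrt_mul (pow_nonneg hb0.le _), ← pow_add]
        refine Real.sqrt_le_sqrt (pow_le_pow_right₀ hb1 ?_)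
        omega
      calc Real.sqrt (b ^ n.natAbs) * (‖fourierCoeff f m‖ * ‖fourierCoeff g (n - m)‖)
          ≤ (Real.sqrt (b ^ m.natAbs) * Real.sqrt (b ^ (n - m).natAbs)) *
            (‖fourierCoeff f m‖ * ‖fourierCoeff g (n - m)‖) :=
            mul_le_mul_of_nonneg_right hkey (by positivity)
        _ = ρ m * a m * e (n - m) := by
            rw [hρa_eq, he_def]
            ring
    calc Real.sqrt (b ^ n.natAbs) * ‖fourierCoeff (f * g) n‖
        ≤ Real.sqrt (b ^ n.natAbs) *
          ∑' m : ℤ, ‖fourierCoeff f m‖ * ‖fourierCoeff g (n - m)‖ :=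
          mul_le_mul_of_nonneg_left h1 (Real.sqrt_nonneg _)
      _ = ∑' m : ℤ, Real.sqrt (b ^ n.natAbs) *
          (‖fourierCoeff f m‖ * ‖fourierCoeff g (n - m)‖) := tsum_mul_left.symm
      _ ≤ ∑' m, ρ m * a m * e (n - m) := by
          refine Summable.tsum_le_tsum hterm (hcs.1.mul_left _) (hS_props n).1
  -- Fubini for the double sum
  have hFprod : Summable (fun p : ℤ × ℤ => ρ p.1 * a p.1 * e (p.2 - p.1) ^ 2) := by
    rw [summable_prod_of_nonneg (fun p => by positivity)]
    constructor
    · intro m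
      exact (he2_shift' m).mul_left (ρ m * a m)
    · refine Summable.congr (hρa.1.mul_right Sg) fun m => ?_
      rw [← he2_shift_tsum m, ← tsum_mul_left]
  have hswap : Summable (fun p : ℤ × ℤ => ρ p.2 * a p.2 * e (p.1 - p.2) ^ 2) := by
    have h := hFprod.prod_symm
    exact h.congr fun p => rfl
  have hT_parts := (summable_prod_of_nonneg
    (f := fun p : ℤ × ℤ => ρ p.2 * a p.2 * e (p.1 - p.2) ^ 2) (fun p => by positivity)).mp hswap
  have hT_summable : Summable Tn := hT_parts.2
  have hT_tsum : ∑' n, Tn n = P * Sg := by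
    have h1 : ∑' n, Tn n = ∑' p : ℤ × ℤ, ρ p.2 * a p.2 * e (p.1 - p.2) ^ 2 :=
      (Summable.tsum_prod hswap).symm
    have h2 : ∑' p : ℤ × ℤ, ρ p.2 * a p.2 * e (p.1 - p.2) ^ 2
        = ∑' p : ℤ × ℤ, ρ p.1 * a p.1 * e (p.2 - p.1) ^ 2 :=
      ((Equiv.prodComm ℤ ℤ).tsum_eq fun p : ℤ × ℤ => ρ p.1 * a p.1 * e (p.2 - p.1) ^ 2)
    have h3 : ∑' p : ℤ × ℤ, ρ p.1 * a p.1 * e (p.2 - p.1) ^ 2 = P * Sg := by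
      rw [Summable.tsum_prod hFprod]
      calc ∑' m, ∑' n, ρ m * a m * e (n - m) ^ 2
          = ∑' m, ρ m * a m * Sg := by
            refine tsum_congr fun m => ?_
            rw [tsum_mul_left, he2_shift_tsum m]
        _ = P * Sg := tsum_mul_right
    rw [h1, h2, h3]
  -- the main estimates
  have hLHS_le : ∀ n : ℤ, b ^ n.natAbs * ‖fourierCoeff (f * g) n‖ ^ 2 ≤ P * Tn n := by
    intro n
    have h0 : b ^ n.natAbs * ‖fourierCoeff (f * g) n‖ ^ 2
        = (Real.sqrt (b ^ n.natAbs) * ‖fourierCoeff (f * g) n‖) ^ 2 := by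
      rw [mul_pow, Real.sq_sqrt (pow_nonneg hb0.le _)]
    rw [h0]
    calc (Real.sqrt (b ^ n.natAbs) * ‖fourierCoeff (f * g) n‖) ^ 2
        ≤ (∑' m, ρ m * a m * e (n - m)) ^ 2 :=
          pow_le_pow_left₀ (by positivity) (hbound n) 2
      _ ≤ P * Tn n := (hS_props n).2
  have hsummable : Summable (fun n : ℤ => b ^ n.natAbs * ‖fourierCoeff (f * g) n‖ ^ 2) :=
    Summable.of_nonneg_of_le (fun n => by positivity) hLHS_le (hT_summable.mul_left P)
  refine ⟨hsummable, ?_⟩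
  have htsum_le : ∑' n : ℤ, b ^ n.natAbs * ‖fourierCoeff (f * g) n‖ ^ 2 ≤ K * Sf * Sg := by
    calc ∑' n : ℤ, b ^ n.natAbs * ‖fourierCoeff (f * g) n‖ ^ 2
        ≤ ∑' n, P * Tn n := Summable.tsum_le_tsum hLHS_le hsummable (hT_summable.mul_left P)
      _ = P * (P * Sg) := by rw [tsum_mul_left, hT_tsum]
      _ = P ^ 2 * Sg := by ring
      _ ≤ (Real.sqrt K * Real.sqrt Sf) ^ 2 * Sg := by
          exact mul_le_mul_of_nonneg_right (pow_le_pow_left₀ hP_nn hP_le 2) hSg_nn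
      _ = K * Sf * Sg := by rw [mul_pow, Real.sq_sqrt hK_nn, Real.sq_sqrt hSf_nn]
  calc Real.sqrt (∑' n : ℤ, b ^ n.natAbs * ‖fourierCoeff (f * g) n‖ ^ 2)
      ≤ Real.sqrt (K * Sf * Sg) := Real.sqrt_le_sqrt htsum_le
    _ = Real.sqrt K * Real.sqrt Sf * Real.sqrt Sg := by
        rw [Real.sqrt_mul (mul_nonneg hK_nn hSf_nn), Real.sqrt_mul hK_nn]
end

section
/- Exponentiation lemma: let B > 1, ψ ∈ k_B real (or complex) valued, and z ∈ ℂ, 1 < b < B. Then e^{zψ} ∈ k_b and ‖e^{zψ}‖_{k_b} ≤ exp(√((B+b)/(B−b)) · |z| · ‖ψ‖_{k_B}). -/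
open MeasureTheory Complex Real
open ENNReal AddCircle

noncomputable section KbAux

local notation "ℓ2" => lp (fun _ : ℤ => ℝ) 2

namespace KbAux

lemma memℓp_two_iff (f : ℤ → ℝ) : Memℓp f 2 ↔ Summable (fun n => f n ^ 2) := by
  rw [memℓp_gen_iff (p := 2) (by norm_num)]
  constructor <;> intro h <;> refine h.congr (fun n => ?_)
  · rw [show ((2:ℝ≥0∞).toReal) = ((2:ℕ):ℝ) by norm_num, Real.rpow_natCast,
      Real.norm_eq_abs, _root_.sq_abs]
  · rw [show ((2:ℝ≥0∞).toReal) = ((2:ℕ):ℝ) by norm_num, Real.rpow_natCast,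
      Real.norm_eq_abs, _root_.sq_abs]

lemma lp2_norm_eq (f : ℓ2) : ‖f‖ = Real.sqrt (∑' n, f n ^ 2) := by
  rw [lp.norm_eq_tsum_rpow (by norm_num) f]
  rw [show ((2:ℝ≥0∞).toReal) = ((2:ℕ):ℝ) by norm_num]
  rw [Real.sqrt_eq_rpow]
  rw [show (1/(((2:ℕ):ℝ))) = (1/2:ℝ) by norm_num]
  congr 1
  refine tsum_congr fun n => ?_
  rw [Real.rpow_natCast, Real.norm_eq_abs, _root_.sq_abs]

def evalCLM (n : ℤ) : ℓ2 →L[ℝ] ℝ :=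
  LinearMap.mkContinuous
    { toFun := fun x => x n
      map_add' := fun x y => rfl
      map_smul' := fun c x => rfl } 1
    (fun x => by rw [one_mul]; exact lp.norm_apply_le_norm (by norm_num) x n)

lemma hasSum_apply {ι : Type*} {F : ι → ℓ2} {S : ℓ2} (h : HasSum F S) (n : ℤ) :
    HasSum (fun i => F i n) (S n) := by
  exact (evalCLM n).hasSum h

lemma minkowski {ι : Type*} (F : ι → ℓ2) (hF : Summable fun i => ‖F i‖)
    (g : ℤ → ℝ) (hg : ∀ n, ‖g n‖ ≤ ∑' i, F i n) :
    Summable (fun n => g n ^ 2) ∧ Real.sqrt (∑' n, g n ^ 2) ≤ ∑' i, ‖F i‖ := by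
  have hFs : Summable F := hF.of_norm
  set S : ℓ2 := ∑' i, F i with hSdef
  have hS : HasSum F S := hFs.hasSum
  have hSn : ∀ n, (∑' i, F i n) = S n := fun n => (hasSum_apply hS n).tsum_eq
  have hgS : ∀ n, g n ^ 2 ≤ S n ^ 2 := by
    intro n
    have h1 : ‖g n‖ ≤ S n := (hSn n) ▸ hg n
    calc g n ^ 2 = ‖g n‖ ^ 2 := by rw [Real.norm_eq_abs, _root_.sq_abs]
    _ ≤ S n ^ 2 := by
        apply pow_le_pow_left₀ (norm_nonneg _) h1
  have hSsq : Summable (fun n => S n ^ 2) := (memℓp_two_iff S).mp (lp.memℓp S)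
  have hgsq : Summable (fun n => g n ^ 2) := by
    refine Summable.of_nonneg_of_le (fun n => sq_nonneg _) hgS hSsq
  refine ⟨hgsq, ?_⟩
  calc Real.sqrt (∑' n, g n ^ 2) ≤ Real.sqrt (∑' n, S n ^ 2) :=
        Real.sqrt_le_sqrt (Summable.tsum_le_tsum hgS hgsq hSsq)
  _ = ‖S‖ := (lp2_norm_eq S).symm
  _ ≤ ∑' i, ‖F i‖ := norm_tsum_le_tsum_norm hF



lemma hasSum_geom_int {q : ℝ} (h0 : 0 ≤ q) (h1 : q < 1) :
    HasSum (fun n : ℤ => q ^ n.natAbs) ((1 + q) / (1 - q)) := by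
  have hn : HasSum (fun k : ℕ => q ^ k) (1 - q)⁻¹ := hasSum_geometric_of_lt_one h0 h1
  have hpos : HasSum (fun k : ℕ => q ^ ((k : ℤ).natAbs)) (1 - q)⁻¹ := by
    simpa using hn
  have hneg : HasSum (fun k : ℕ => q ^ ((-((k:ℤ) + 1)).natAbs)) ((1 - q)⁻¹ * q) := by
    have h := hn.mul_right q
    have hfg : (fun k : ℕ => q ^ k * q) = (fun k : ℕ => q ^ ((-((k:ℤ)+1)).natAbs)) := by
      funext k
      have hk : ((-((k:ℤ)+1)).natAbs) = k + 1 := by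
        rw [Int.natAbs_neg]
        exact_mod_cast Int.natAbs_natCast (k+1)
      rw [hk, pow_succ]
    exact hfg ▸ h
  have h := HasSum.of_nat_of_neg_add_one (f := fun n : ℤ => q ^ n.natAbs) hpos hneg
  have hq : (1:ℝ) - q ≠ 0 := ne_of_gt (by linarith : (0:ℝ) < 1 - q)
  have : (1-q)⁻¹ + (1-q)⁻¹ * q = (1 + q) / (1 - q) := by
    field_simp
    try ring
  rwa [this] at h

lemma exists_bound (f : AddCircle (1:ℝ) → ℂ) (hf : Continuous f) :
    ∃ M : ℝ, 0 ≤ M ∧ ∀ x, ‖f x‖ ≤ M := by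
  obtain ⟨C, hC⟩ := isCompact_univ.exists_bound_of_continuousOn hf.continuousOn
  exact ⟨max C 0, le_max_right _ _,
    fun x => le_trans (hC x (Set.mem_univ x)) (le_max_left _ _)⟩

lemma conv (f g : AddCircle (1:ℝ) → ℂ) (hf : Continuous f) (hg : Continuous g)
    (hfs : Summable (fun m => ‖fourierCoeff f m‖)) (n : ℤ) :
    HasSum (fun m => fourierCoeff f m * fourierCoeff g (n - m))
      (fourierCoeff (fun x => f x * g x) n) := by
  obtain ⟨M, hM0, hM⟩ := exists_bound g hg
  set F : ℤ → AddCircle (1:ℝ) → ℂ :=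
    fun m t => fourierCoeff f m * (fourier (m - n) t * g t) with hF
  have hFc : ∀ m, Continuous (F m) := fun m =>
    continuous_const.mul ((map_continuous (fourier (m - n))).mul hg)
  have hFi : ∀ m, Integrable (F m) haarAddCircle := fun m =>
    (hFc m).integrable_of_hasCompactSupport (HasCompactSupport.of_compactSpace _)
  have hFnorm : ∀ m t, ‖F m t‖ ≤ ‖fourierCoeff f m‖ * M := by
    intro m t
    rw [hF]
    simp only [norm_mul]
    have h1 : ‖fourier (m - n) t‖ = 1 := Circle.norm_coe _
    rw [h1, one_mul]
    exact mul_le_mul_of_nonneg_left (hM t) (norm_nonneg _)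
  have hsum : Summable (fun m => ∫ t, ‖F m t‖ ∂haarAddCircle) := by
    refine Summable.of_nonneg_of_le (fun m => integral_nonneg fun t => norm_nonneg _)
      (fun m => ?_) (hfs.mul_right M)
    calc ∫ t, ‖F m t‖ ∂haarAddCircle
        ≤ ∫ _t, ‖fourierCoeff f m‖ * M ∂haarAddCircle :=
          integral_mono (hFi m).norm (integrable_const _) (fun t => hFnorm m t)
      _ = ‖fourierCoeff f m‖ * M := by simp
  have key := hasSum_integral_of_summable_integral_norm hFi hsum
  have hpt : ∀ t, (∑' m, F m t) = fourier (-n) t • (f t * g t) := by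
    intro t
    have h1 : HasSum (fun m => fourierCoeff f m • fourier m t) (f t) :=
      has_pointwise_sum_fourier_series_of_summable
        (f := ContinuousMap.mk f hf) hfs.of_norm t
    have h2 := h1.mul_right (fourier (-n) t * g t)
    have hfg : (fun m => (fourierCoeff f m • fourier m t) * (fourier (-n) t * g t)) = fun m => F m t := by
      funext m
      show fourierCoeff f m • fourier m t * (fourier (-n) t * g t)
          = fourierCoeff f m * (fourier (m - n) t * g t)
      have : fourier (m - n) t = fourier m t * fourier (-n) t := by
        rw [← fourier_add]; norm_num [sub_eq_add_neg]
      rw [this, smul_eq_mul]; ring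
    rw [hfg] at h2
    rw [h2.tsum_eq, smul_eq_mul]; ring
  have hint : (∫ t, (∑' m, F m t) ∂haarAddCircle) = fourierCoeff (fun x => f x * g x) n := by
    rw [integral_congr_ae (Filter.Eventually.of_forall hpt)]
    rfl
  rw [hint] at key
  have heach : ∀ m, (∫ t, F m t ∂haarAddCircle) = fourierCoeff f m * fourierCoeff g (n - m) := by
    intro m
    show (∫ t, fourierCoeff f m * (fourier (m - n) t * g t) ∂haarAddCircle) = _
    rw [integral_const_mul]
    congr 1
    rw [fourierCoeff]
    congr 1
    funext t
    rw [neg_sub, smul_eq_mul]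
  exact (funext heach) ▸ key



def wseq (c : ℝ) (f : AddCircle (1:ℝ) → ℂ) : ℤ → ℝ :=
  fun n => Real.sqrt c ^ n.natAbs * ‖fourierCoeff f n‖

lemma wseq_nonneg (c : ℝ) (f : AddCircle (1:ℝ) → ℂ) (n : ℤ) : 0 ≤ wseq c f n :=
  mul_nonneg (pow_nonneg (Real.sqrt_nonneg c) _) (norm_nonneg _)

lemma wseq_sq {c : ℝ} (hc : 0 ≤ c) (f : AddCircle (1:ℝ) → ℂ) (n : ℤ) :
    wseq c f n ^ 2 = c ^ n.natAbs * ‖fourierCoeff f n‖ ^ 2 := by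
  rw [wseq, mul_pow, ← pow_mul, mul_comm n.natAbs 2, pow_mul, Real.sq_sqrt hc]

def shiftlp (m : ℤ) (v : ℓ2) : ℓ2 :=
  ⟨fun n => v (n - m), by
    show Memℓp (fun n => v (n - m)) 2
    rw [memℓp_two_iff]
    have h := (memℓp_two_iff v).mp (lp.memℓp v)
    exact ((Equiv.subRight m).summable_iff (f := fun n => v n ^ 2)).mpr h⟩

lemma shiftlp_apply (m : ℤ) (v : ℓ2) (n : ℤ) : shiftlp m v n = v (n - m) := rfl

lemma shiftlp_norm (m : ℤ) (v : ℓ2) : ‖shiftlp m v‖ = ‖v‖ := by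
  rw [lp2_norm_eq, lp2_norm_eq]
  congr 1
  exact (Equiv.subRight m).tsum_eq (fun n => v n ^ 2)

lemma mult {B b : ℝ} (hb : 1 < b) (hB : b < B)
    (f g : AddCircle (1:ℝ) → ℂ) (hfc : Continuous f) (hgc : Continuous g)
    (hfs : Summable fun m => ‖fourierCoeff f m‖)
    (hu : Memℓp (wseq B f) 2) (hv : Memℓp (wseq b g) 2) :
    Memℓp (wseq b fun x => f x * g x) 2 ∧
    Real.sqrt (∑' n, wseq b (fun x => f x * g x) n ^ 2) ≤
      Real.sqrt ((B + b) / (B - b)) * Real.sqrt (∑' m, wseq B f m ^ 2) *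
        Real.sqrt (∑' j, wseq b g j ^ 2) := by
  have hb0 : (0:ℝ) < b := by linarith
  have hB0 : (0:ℝ) < B := by linarith
  set r := Real.sqrt b with hrdef
  set R := Real.sqrt B with hRdef
  set q := r / R with hqdef
  have hr1 : 1 ≤ r := by
    rw [hrdef, show (1:ℝ) = Real.sqrt 1 by simp]
    exact Real.sqrt_le_sqrt hb.le
  have hR0 : 0 < R := Real.sqrt_pos.mpr hB0
  have hq0 : 0 ≤ q := div_nonneg (Real.sqrt_nonneg _) hR0.le
  have hq1 : q < 1 := by
    rw [hqdef, div_lt_one hR0]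
    exact Real.sqrt_lt_sqrt hb0.le hB
  have hqsq : q ^ 2 = b / B := by
    rw [hqdef, div_pow, hrdef, hRdef, Real.sq_sqrt hb0.le, Real.sq_sqrt hB0.le]
  have hq2 : q ^ 2 < 1 := by nlinarith
  have hgeo2 : HasSum (fun m : ℤ => (q ^ 2) ^ m.natAbs) ((1 + q ^ 2) / (1 - q ^ 2)) :=
    hasSum_geom_int (sq_nonneg q) hq2
  have hval : (1 + q ^ 2) / (1 - q ^ 2) = (B + b) / (B - b) := by
    rw [hqsq]
    have hBb : B - b ≠ 0 := ne_of_gt (by linarith)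
    field_simp

  set u : ℓ2 := ⟨wseq B f, hu⟩ with hudef
  set v2 : ℓ2 := ⟨wseq b g, hv⟩ with hvdef
  have hxsum : Summable (fun m : ℤ => (q ^ m.natAbs) ^ 2) :=
    hgeo2.summable.congr fun m => by rw [← pow_mul, ← pow_mul, mul_comm]
  set x : ℓ2 := ⟨fun m : ℤ => q ^ m.natAbs, (memℓp_two_iff _).mpr hxsum⟩ with hxdef
  have hxnorm : ‖x‖ = Real.sqrt ((B + b) / (B - b)) := by
    rw [lp2_norm_eq]
    congr 1
    rw [← hval, ← hgeo2.tsum_eq]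
    exact tsum_congr fun m => by rw [← pow_mul, ← pow_mul, mul_comm]
  have hqu : Summable (fun m : ℤ => q ^ m.natAbs * wseq B f m) := by
    have h := lp.summable_inner (𝕜 := ℝ) x u
    exact (by simpa [RCLike.inner_apply] using h : Summable fun i => u i * x i).congr fun m => mul_comm _ _
  have huno : ‖u‖ = Real.sqrt (∑' m, wseq B f m ^ 2) := by
    rw [lp2_norm_eq]
  have hvno : ‖v2‖ = Real.sqrt (∑' j, wseq b g j ^ 2) := by
    rw [lp2_norm_eq]
  have hCS : ∑' m : ℤ, q ^ m.natAbs * wseq B f m ≤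
      Real.sqrt ((B + b) / (B - b)) * Real.sqrt (∑' m, wseq B f m ^ 2) := by
    have h1 : (inner ℝ x u : ℝ) = ∑' m : ℤ, q ^ m.natAbs * wseq B f m := by
      rw [lp.inner_eq_tsum]
      simp [RCLike.inner_apply]
      exact tsum_congr fun m => mul_comm _ _
    have h2 := real_inner_le_norm x u
    rw [h1, hxnorm, huno] at h2
    exact h2
  have hvb : ∀ j : ℤ, ‖fourierCoeff g j‖ ≤ ‖v2‖ := by
    intro j
    have h1 : ‖fourierCoeff g j‖ ≤ wseq b g j := by
      have hone : (1:ℝ) ≤ r ^ j.natAbs := by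
        calc (1:ℝ) = 1 ^ j.natAbs := (one_pow _).symm
        _ ≤ r ^ j.natAbs := pow_le_pow_left₀ zero_le_one hr1 _
      calc ‖fourierCoeff g j‖ = 1 * ‖fourierCoeff g j‖ := (one_mul _).symm
      _ ≤ r ^ j.natAbs * ‖fourierCoeff g j‖ :=
          mul_le_mul_of_nonneg_right hone (norm_nonneg _)
      _ = wseq b g j := by rw [wseq, hrdef]
    have h2 : wseq b g j ≤ ‖v2‖ := by
      have h3 := lp.norm_apply_le_norm (by norm_num : (2:ℝ≥0∞) ≠ 0) v2 j
      rwa [Real.norm_eq_abs, _root_.abs_of_nonneg (wseq_nonneg b g j)] at h3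
    exact h1.trans h2
  have hsn : ∀ n : ℤ, Summable (fun m => ‖fourierCoeff f m * fourierCoeff g (n - m)‖) := by
    intro n
    refine Summable.of_nonneg_of_le (fun m => norm_nonneg _) (fun m => ?_) (hfs.mul_right ‖v2‖)
    rw [norm_mul]
    exact mul_le_mul_of_nonneg_left (hvb _) (norm_nonneg _)
  have hterm : ∀ n m : ℤ, r ^ n.natAbs * ‖fourierCoeff f m * fourierCoeff g (n - m)‖ ≤
      (q ^ m.natAbs * wseq B f m) * wseq b g (n - m) := by
    intro n m
    have hqR : q ^ m.natAbs * R ^ m.natAbs = r ^ m.natAbs := by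
      rw [← mul_pow, hqdef, div_mul_cancel₀ _ hR0.ne']
    have hnat : n.natAbs ≤ m.natAbs + (n - m).natAbs := by
      have h := Int.natAbs_add_le m (n - m)
      rwa [show m + (n - m) = n by ring] at h
    have hrpow : r ^ n.natAbs ≤ r ^ m.natAbs * r ^ (n - m).natAbs := by
      rw [← pow_add]
      exact pow_le_pow_right₀ hr1 hnat
    calc r ^ n.natAbs * ‖fourierCoeff f m * fourierCoeff g (n - m)‖
        = r ^ n.natAbs * (‖fourierCoeff f m‖ * ‖fourierCoeff g (n - m)‖) := by rw [norm_mul]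
      _ ≤ (r ^ m.natAbs * r ^ (n - m).natAbs) * (‖fourierCoeff f m‖ * ‖fourierCoeff g (n - m)‖) :=
          mul_le_mul_of_nonneg_right hrpow (mul_nonneg (norm_nonneg _) (norm_nonneg _))
      _ = (q ^ m.natAbs * wseq B f m) * wseq b g (n - m) := by
          rw [wseq, wseq, ← hrdef, ← hRdef, ← hqR]; ring
  have key : ∀ n : ℤ, wseq b (fun x => f x * g x) n ≤
      ∑' m, (q ^ m.natAbs * wseq B f m) * wseq b g (n - m) := by
    intro n
    have hconv := conv f g hfc hgc hfs n
    have h1 : ‖fourierCoeff (fun x => f x * g x) n‖ ≤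
        ∑' m, ‖fourierCoeff f m * fourierCoeff g (n - m)‖ := by
      rw [← hconv.tsum_eq]
      exact norm_tsum_le_tsum_norm (hsn n)
    have hRHS : Summable (fun m => (q ^ m.natAbs * wseq B f m) * wseq b g (n - m)) := by
      refine Summable.of_nonneg_of_le
        (fun m => mul_nonneg (mul_nonneg (pow_nonneg hq0 _) (wseq_nonneg _ _ _))
          (wseq_nonneg _ _ _)) (fun m => ?_) (hqu.mul_right ‖v2‖)
      refine mul_le_mul_of_nonneg_left ?_ (mul_nonneg (pow_nonneg hq0 _) (wseq_nonneg _ _ _))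
      have h3 := lp.norm_apply_le_norm (by norm_num : (2:ℝ≥0∞) ≠ 0) v2 (n - m)
      rwa [Real.norm_eq_abs, _root_.abs_of_nonneg (wseq_nonneg b g (n - m))] at h3
    calc wseq b (fun x => f x * g x) n
        = r ^ n.natAbs * ‖fourierCoeff (fun x => f x * g x) n‖ := by rw [wseq, hrdef]
      _ ≤ r ^ n.natAbs * ∑' m, ‖fourierCoeff f m * fourierCoeff g (n - m)‖ :=
          mul_le_mul_of_nonneg_left h1 (pow_nonneg (by linarith) _)
      _ = ∑' m, r ^ n.natAbs * ‖fourierCoeff f m * fourierCoeff g (n - m)‖ := tsum_mul_left.symm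
      _ ≤ ∑' m, (q ^ m.natAbs * wseq B f m) * wseq b g (n - m) :=
          Summable.tsum_le_tsum (fun m => hterm n m) ((hsn n).mul_left _) hRHS
  set F : ℤ → ℓ2 := fun m => (q ^ m.natAbs * wseq B f m) • shiftlp m v2 with hFdef
  have hFnorm : ∀ m, ‖F m‖ = (q ^ m.natAbs * wseq B f m) * ‖v2‖ := by
    intro m
    rw [hFdef]
    rw [norm_smul, shiftlp_norm, Real.norm_eq_abs,
      _root_.abs_of_nonneg (mul_nonneg (pow_nonneg hq0 _) (wseq_nonneg _ _ _))]
  have hFs : Summable (fun m => ‖F m‖) :=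
    (hqu.mul_right ‖v2‖).congr fun m => (hFnorm m).symm
  have hFa : ∀ m n : ℤ, F m n = (q ^ m.natAbs * wseq B f m) * wseq b g (n - m) := by
    intro m n
    rw [hFdef]
    simp only [lp.coeFn_smul, Pi.smul_apply, smul_eq_mul]
    rfl
  have hmink := minkowski F hFs (wseq b fun x => f x * g x) (fun n => by
    rw [Real.norm_eq_abs, _root_.abs_of_nonneg (wseq_nonneg _ _ _)]
    calc wseq b (fun x => f x * g x) n
        ≤ ∑' m, (q ^ m.natAbs * wseq B f m) * wseq b g (n - m) := key n
      _ = ∑' m, F m n := tsum_congr fun m => (hFa m n).symm)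
  refine ⟨(memℓp_two_iff _).mpr hmink.1, ?_⟩
  calc Real.sqrt (∑' n, wseq b (fun x => f x * g x) n ^ 2) ≤ ∑' m, ‖F m‖ := hmink.2
    _ = (∑' m, q ^ m.natAbs * wseq B f m) * ‖v2‖ :=
        (tsum_congr hFnorm).trans tsum_mul_right
    _ ≤ (Real.sqrt ((B + b) / (B - b)) * Real.sqrt (∑' m, wseq B f m ^ 2)) * ‖v2‖ :=
        mul_le_mul_of_nonneg_right hCS (norm_nonneg _)
    _ = Real.sqrt ((B + b) / (B - b)) * Real.sqrt (∑' m, wseq B f m ^ 2) *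
        Real.sqrt (∑' j, wseq b g j ^ 2) := by rw [hvno]



lemma fourierCoeff_one (n : ℤ) :
    fourierCoeff (fun _ : AddCircle (1:ℝ) => (1:ℂ)) n = if n = 0 then 1 else 0 := by
  by_cases h : n = 0
  · subst h
    rw [if_pos rfl, fourierCoeff]
    simp [fourier_zero]
  · rw [if_neg h, fourierCoeff]
    simp only [smul_eq_mul, mul_one]
    have hn : -n ≠ 0 := neg_ne_zero.mpr h
    exact integral_eq_zero_of_add_right_eq_neg
      (fourier_add_half_inv_index hn (by norm_num : (0:ℝ) < 1))

lemma abs_summable_of_wsq {B : ℝ} (hB : 1 < B) (ψ : AddCircle (1:ℝ) → ℂ)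
    (hψ : Summable fun n : ℤ => B ^ n.natAbs * ‖fourierCoeff ψ n‖ ^ 2) :
    Summable fun n : ℤ => ‖fourierCoeff ψ n‖ := by
  have hB0 : (0:ℝ) < B := by linarith
  set s : ℝ := 1 / Real.sqrt B with hsdef
  have hR1 : 1 < Real.sqrt B := by
    rw [show (1:ℝ) = Real.sqrt 1 by simp]
    exact Real.sqrt_lt_sqrt zero_le_one hB
  have hR0 : (0:ℝ) < Real.sqrt B := by linarith
  have hs0 : 0 ≤ s := by positivity
  have hs1 : s < 1 := by
    rw [hsdef, div_lt_one hR0]; exact hR1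
  have hs2 : s ^ 2 < 1 := by nlinarith
  have hgeo : Summable (fun n : ℤ => (s ^ 2) ^ n.natAbs) :=
    (hasSum_geom_int (sq_nonneg s) hs2).summable
  have hw : Summable (fun n : ℤ => wseq B ψ n ^ 2) :=
    hψ.congr fun n => (wseq_sq hB0.le ψ n).symm
  refine Summable.of_nonneg_of_le (fun n => norm_nonneg _) (fun n => ?_)
    (((hgeo.add hw).mul_left (1/2 : ℝ)))
  have hid : ‖fourierCoeff ψ n‖ = s ^ n.natAbs * wseq B ψ n := by
    rw [wseq, hsdef, ← mul_assoc, ← mul_pow, one_div,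
      inv_mul_cancel₀ hR0.ne', one_pow, one_mul]
  rw [hid]
  have h1 : (s ^ n.natAbs) ^ 2 = (s ^ 2) ^ n.natAbs := by
    rw [← pow_mul, ← pow_mul, mul_comm]
  nlinarith [sq_nonneg (s ^ n.natAbs - wseq B ψ n), sq_nonneg (s ^ n.natAbs),
    sq_nonneg (wseq B ψ n)]

lemma pow_bound {B b : ℝ} (hb : 1 < b) (hB : b < B) (ψ : AddCircle (1:ℝ) → ℂ)
    (hψc : Continuous ψ) (hfs : Summable fun m => ‖fourierCoeff ψ m‖)
    (hu : Memℓp (wseq B ψ) 2) (k : ℕ) :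
    Memℓp (wseq b (fun x => ψ x ^ k)) 2 ∧
      Real.sqrt (∑' n, wseq b (fun x => ψ x ^ k) n ^ 2) ≤
        (Real.sqrt ((B + b) / (B - b)) * Real.sqrt (∑' m, wseq B ψ m ^ 2)) ^ k := by
  have hb0 : (0:ℝ) < b := by linarith
  induction k with
  | zero =>
    have hfun : (fun x : AddCircle (1:ℝ) => ψ x ^ 0) = fun _ => (1:ℂ) := by
      funext x; rw [pow_zero]
    rw [hfun]
    have hsq : (fun n : ℤ => wseq b (fun _ : AddCircle (1:ℝ) => (1:ℂ)) n ^ 2)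
        = fun n : ℤ => if n = 0 then (1:ℝ) else 0 := by
      funext n
      rw [wseq_sq hb0.le, fourierCoeff_one n]
      by_cases h : n = 0
      · subst h; simp
      · simp [h]
    constructor
    · rw [memℓp_two_iff, hsq]
      exact summable_of_ne_finset_zero (s := ({0} : Finset ℤ))
        (fun n hn => if_neg (by simpa using hn))
    · have ht : ∑' n : ℤ, wseq b (fun _ : AddCircle (1:ℝ) => (1:ℂ)) n ^ 2 = 1 := by
        rw [hsq]
        exact tsum_ite_eq (0:ℤ) (fun _ => (1:ℝ))
      rw [ht, pow_zero, Real.sqrt_one]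
  | succ k ih =>
    have hcont : Continuous fun x => ψ x ^ k := hψc.pow k
    have h := mult hb hB ψ (fun x => ψ x ^ k) hψc hcont hfs hu ih.1
    have hfun : (fun x : AddCircle (1:ℝ) => ψ x ^ (k+1)) = fun x => ψ x * ψ x ^ k := by
      funext x; rw [pow_succ, mul_comm]
    rw [hfun]
    refine ⟨h.1, ?_⟩
    have hCN0 : 0 ≤ Real.sqrt ((B + b) / (B - b)) * Real.sqrt (∑' m, wseq B ψ m ^ 2) :=
      mul_nonneg (Real.sqrt_nonneg _) (Real.sqrt_nonneg _)
    calc Real.sqrt (∑' n, wseq b (fun x => ψ x * ψ x ^ k) n ^ 2)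
        ≤ Real.sqrt ((B + b) / (B - b)) * Real.sqrt (∑' m, wseq B ψ m ^ 2) *
            Real.sqrt (∑' j, wseq b (fun x => ψ x ^ k) j ^ 2) := h.2
      _ ≤ Real.sqrt ((B + b) / (B - b)) * Real.sqrt (∑' m, wseq B ψ m ^ 2) *
            (Real.sqrt ((B + b) / (B - b)) * Real.sqrt (∑' m, wseq B ψ m ^ 2)) ^ k :=
          mul_le_mul_of_nonneg_left ih.2 hCN0
      _ = (Real.sqrt ((B + b) / (B - b)) * Real.sqrt (∑' m, wseq B ψ m ^ 2)) ^ (k+1) :=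
          (pow_succ' _ _).symm

lemma exp_coeff (ψ : AddCircle (1:ℝ) → ℂ) (hψc : Continuous ψ) (z : ℂ) (n : ℤ) :
    HasSum (fun k : ℕ => (z ^ k / (k.factorial : ℂ)) * fourierCoeff (fun x => ψ x ^ k) n)
      (fourierCoeff (fun x => Complex.exp (z * ψ x)) n) := by
  obtain ⟨M, hM0, hM⟩ := exists_bound ψ hψc
  set G : ℕ → AddCircle (1:ℝ) → ℂ :=
    fun k t => fourier (-n) t • ((z * ψ t) ^ k / (k.factorial : ℂ)) with hG
  have hGc : ∀ k, Continuous (G k) := fun k =>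
    (map_continuous (fourier (-n))).smul (((continuous_const.mul hψc).pow k).div_const _)
  have hGi : ∀ k, Integrable (G k) haarAddCircle := fun k =>
    (hGc k).integrable_of_hasCompactSupport (HasCompactSupport.of_compactSpace _)
  have hGn : ∀ k t, ‖G k t‖ ≤ (‖z‖ * M) ^ k / k.factorial := by
    intro k t
    rw [hG]
    simp only [norm_smul, norm_div, norm_pow, norm_mul]
    have h1 : ‖fourier (-n) t‖ = 1 := Circle.norm_coe _
    rw [h1, one_mul]
    have h2 : ‖((k.factorial : ℂ))‖ = (k.factorial : ℝ) := by
      rw [Complex.norm_natCast]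
    rw [h2]
    have hk : (0:ℝ) < k.factorial := by positivity
    have h3 : (‖z‖ * ‖ψ t‖) ^ k ≤ (‖z‖ * M) ^ k :=
      pow_le_pow_left₀ (by positivity) (mul_le_mul_of_nonneg_left (hM t) (norm_nonneg _)) k
    exact (div_le_div_iff_of_pos_right hk).mpr h3
  have hsum : Summable (fun k => ∫ t, ‖G k t‖ ∂haarAddCircle) := by
    refine Summable.of_nonneg_of_le (fun k => integral_nonneg fun t => norm_nonneg _)
      (fun k => ?_) (Real.summable_pow_div_factorial (‖z‖ * M))
    calc ∫ t, ‖G k t‖ ∂haarAddCircle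
        ≤ ∫ _t, (‖z‖ * M) ^ k / k.factorial ∂haarAddCircle :=
          integral_mono (hGi k).norm (integrable_const _) (hGn k)
      _ = (‖z‖ * M) ^ k / k.factorial := by simp
  have key := hasSum_integral_of_summable_integral_norm hGi hsum
  have hpt : ∀ t, (∑' k, G k t) = fourier (-n) t • Complex.exp (z * ψ t) := by
    intro t
    have he : HasSum (fun k => (z * ψ t) ^ k / (k.factorial : ℂ)) (Complex.exp (z * ψ t)) := by
      rw [Complex.exp_eq_exp_ℂ]
      exact NormedSpace.expSeries_div_hasSum_exp (z * ψ t)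
    exact (he.const_smul (fourier (-n) t)).tsum_eq
  have hint : (∫ t, (∑' k, G k t) ∂haarAddCircle)
      = fourierCoeff (fun x => Complex.exp (z * ψ x)) n := by
    rw [integral_congr_ae (Filter.Eventually.of_forall hpt)]
    rfl
  rw [hint] at key
  have heach : ∀ k, (∫ t, G k t ∂haarAddCircle)
      = (z ^ k / (k.factorial : ℂ)) * fourierCoeff (fun x => ψ x ^ k) n := by
    intro k
    have hGk : ∀ t, G k t = (z ^ k / (k.factorial : ℂ)) * (fourier (-n) t • ψ t ^ k) := by
      intro t
      rw [hG]
      simp only [smul_eq_mul, mul_pow]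
      ring
    calc (∫ t, G k t ∂haarAddCircle)
        = ∫ t, (z ^ k / (k.factorial : ℂ)) * (fourier (-n) t • ψ t ^ k) ∂haarAddCircle :=
          integral_congr_ae (Filter.Eventually.of_forall hGk)
      _ = (z ^ k / (k.factorial : ℂ)) * ∫ t, fourier (-n) t • ψ t ^ k ∂haarAddCircle :=
          integral_const_mul _ _
      _ = _ := rfl
  exact (funext heach) ▸ key

end KbAux

open KbAux
set_option maxHeartbeats 2000000

/-- Exponentiation lemma: for `1 < b < B` and `ψ ∈ k_B`, one has `e^{zψ} ∈ k_b` with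
`‖e^{zψ}‖_{k_b} ≤ exp(√((B+b)/(B-b)) |z| ‖ψ‖_{k_B})`. -/
theorem kb_exponentiation (B b : ℝ) (hb : 1 < b) (hB : b < B)
    (ψ : AddCircle (1:ℝ) → ℂ) (hψc : Continuous ψ)
    (hψ : Summable fun n : ℤ => B ^ n.natAbs * ‖fourierCoeff ψ n‖ ^ 2) (z : ℂ) :
    (Summable fun n : ℤ =>
        b ^ n.natAbs * ‖fourierCoeff (fun x => Complex.exp (z * ψ x)) n‖ ^ 2) ∧
    Real.sqrt (∑' n : ℤ,
        b ^ n.natAbs * ‖fourierCoeff (fun x => Complex.exp (z * ψ x)) n‖ ^ 2) ≤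
      Real.exp (Real.sqrt ((B + b) / (B - b)) * ‖z‖ *
        Real.sqrt (∑' n : ℤ, B ^ n.natAbs * ‖fourierCoeff ψ n‖ ^ 2)) := by
  have hb0 : (0:ℝ) < b := by linarith
  have hB0 : (0:ℝ) < B := by linarith
  have hr1 : 1 ≤ Real.sqrt b := by
    rw [show (1:ℝ) = Real.sqrt 1 by simp]
    exact Real.sqrt_le_sqrt hb.le
  have hfs := abs_summable_of_wsq (lt_trans hb hB) ψ hψ
  have hu : Memℓp (wseq B ψ) 2 :=
    (memℓp_two_iff _).mpr (hψ.congr fun n => (wseq_sq hB0.le ψ n).symm)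
  set C := Real.sqrt ((B + b) / (B - b)) with hC
  set N := Real.sqrt (∑' m, wseq B ψ m ^ 2) with hN
  have hCN0 : 0 ≤ C * N := mul_nonneg (Real.sqrt_nonneg _) (Real.sqrt_nonneg _)
  have hpow := fun k => pow_bound hb hB ψ hψc hfs hu k
  set F : ℕ → lp (fun _ : ℤ => ℝ) 2 := fun k =>
    ((‖z‖ ^ k / k.factorial : ℝ)) •
      (⟨wseq b (fun x => ψ x ^ k), (hpow k).1⟩ : lp (fun _ : ℤ => ℝ) 2) with hF
  have hFnorm : ∀ k, ‖F k‖ =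
      (‖z‖ ^ k / k.factorial) * Real.sqrt (∑' n, wseq b (fun x => ψ x ^ k) n ^ 2) := by
    intro k
    rw [hF, norm_smul, Real.norm_eq_abs, _root_.abs_of_nonneg (by positivity), lp2_norm_eq]
  have hFle : ∀ k, ‖F k‖ ≤ (‖z‖ * (C * N)) ^ k / k.factorial := by
    intro k
    rw [hFnorm k]
    calc (‖z‖ ^ k / k.factorial) * Real.sqrt (∑' n, wseq b (fun x => ψ x ^ k) n ^ 2)
        ≤ (‖z‖ ^ k / k.factorial) * (C * N) ^ k :=
          mul_le_mul_of_nonneg_left (hpow k).2 (by positivity)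
      _ = (‖z‖ * (C * N)) ^ k / k.factorial := by rw [mul_pow]; ring
  have hFs : Summable (fun k => ‖F k‖) :=
    Summable.of_nonneg_of_le (fun k => norm_nonneg _) hFle
      (Real.summable_pow_div_factorial _)
  have hsingle : ∀ k (n : ℤ), ‖fourierCoeff (fun x => ψ x ^ k) n‖ ≤ (C * N) ^ k := by
    intro k n
    have hone : (1:ℝ) ≤ Real.sqrt b ^ n.natAbs := by
      calc (1:ℝ) = 1 ^ n.natAbs := (one_pow _).symm
      _ ≤ Real.sqrt b ^ n.natAbs := pow_le_pow_left₀ zero_le_one hr1 _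
    have h1 : ‖fourierCoeff (fun x => ψ x ^ k) n‖ ≤ wseq b (fun x => ψ x ^ k) n := by
      calc ‖fourierCoeff (fun x => ψ x ^ k) n‖
          = 1 * ‖fourierCoeff (fun x => ψ x ^ k) n‖ := (one_mul _).symm
        _ ≤ Real.sqrt b ^ n.natAbs * ‖fourierCoeff (fun x => ψ x ^ k) n‖ :=
            mul_le_mul_of_nonneg_right hone (norm_nonneg _)
        _ = wseq b (fun x => ψ x ^ k) n := by simp only [wseq]
    have hsumk : Summable (fun j : ℤ => wseq b (fun x => ψ x ^ k) j ^ 2) :=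
      (memℓp_two_iff _).mp (hpow k).1
    have h2 : wseq b (fun x => ψ x ^ k) n ≤
        Real.sqrt (∑' j, wseq b (fun x => ψ x ^ k) j ^ 2) := by
      rw [show wseq b (fun x => ψ x ^ k) n
          = Real.sqrt (wseq b (fun x => ψ x ^ k) n ^ 2) from
          (Real.sqrt_sq (wseq_nonneg _ _ _)).symm]
      exact Real.sqrt_le_sqrt (Summable.le_tsum hsumk n (fun j _ => sq_nonneg _))
    exact h1.trans (h2.trans (hpow k).2)
  have hkey : ∀ n : ℤ, ‖wseq b (fun x => Complex.exp (z * ψ x)) n‖ ≤ ∑' k, F k n := by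
    intro n
    have hconv := exp_coeff ψ hψc z n
    have hnormsum : Summable (fun k : ℕ =>
        ‖(z ^ k / (k.factorial : ℂ)) * fourierCoeff (fun x => ψ x ^ k) n‖) := by
      refine Summable.of_nonneg_of_le (fun k => norm_nonneg _) (fun k => ?_)
        (Real.summable_pow_div_factorial (‖z‖ * (C * N)))
      rw [norm_mul, norm_div, norm_pow, Complex.norm_natCast]
      calc ‖z‖ ^ k / k.factorial * ‖fourierCoeff (fun x => ψ x ^ k) n‖
          ≤ ‖z‖ ^ k / k.factorial * (C * N) ^ k :=
            mul_le_mul_of_nonneg_left (hsingle k n) (by positivity)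
        _ = (‖z‖ * (C * N)) ^ k / k.factorial := by rw [mul_pow]; ring
    have h1 : ‖fourierCoeff (fun x => Complex.exp (z * ψ x)) n‖ ≤
        ∑' k, ‖(z ^ k / (k.factorial : ℂ)) * fourierCoeff (fun x => ψ x ^ k) n‖ := by
      rw [← hconv.tsum_eq]
      exact norm_tsum_le_tsum_norm hnormsum
    have hFa : ∀ k : ℕ, (F k : ℤ → ℝ) n = Real.sqrt b ^ n.natAbs *
        ‖(z ^ k / (k.factorial : ℂ)) * fourierCoeff (fun x => ψ x ^ k) n‖ := by
      intro k
      rw [hF]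
      simp only [lp.coeFn_smul, Pi.smul_apply, smul_eq_mul]
      rw [norm_mul, norm_div, norm_pow, Complex.norm_natCast]
      show (‖z‖ ^ k / k.factorial) * wseq b (fun x => ψ x ^ k) n = _
      rw [wseq]
      ring
    rw [Real.norm_eq_abs, _root_.abs_of_nonneg (wseq_nonneg _ _ _)]
    have hsum_eq2 : ∑' k : ℕ, (F k : ℤ → ℝ) n = Real.sqrt b ^ n.natAbs *
        ∑' k, ‖(z ^ k / (k.factorial : ℂ)) * fourierCoeff (fun x => ψ x ^ k) n‖ := by
      rw [tsum_congr hFa]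
      exact hnormsum.tsum_mul_left _
    rw [hsum_eq2]
    have hw : wseq b (fun x => Complex.exp (z * ψ x)) n
        = Real.sqrt b ^ n.natAbs * ‖fourierCoeff (fun x => Complex.exp (z * ψ x)) n‖ := by
      simp only [wseq]
    rw [hw]
    exact mul_le_mul_of_nonneg_left h1 (by positivity)
  have hmink := minkowski F hFs (wseq b fun x => Complex.exp (z * ψ x)) hkey
  have hsum_eq : (fun n : ℤ => wseq b (fun x => Complex.exp (z * ψ x)) n ^ 2)
      = fun n : ℤ => b ^ n.natAbs * ‖fourierCoeff (fun x => Complex.exp (z * ψ x)) n‖ ^ 2 :=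
    funext fun n => wseq_sq hb0.le _ n
  constructor
  · exact hmink.1.congr fun n => congrFun hsum_eq n
  · have hNeq : Real.sqrt (∑' n : ℤ, B ^ n.natAbs * ‖fourierCoeff ψ n‖ ^ 2) = N := by
      rw [hN]
      congr 1
      exact (tsum_congr fun n => (wseq_sq hB0.le ψ n).symm)
    rw [hNeq]
    have hgoal_eq : (∑' n : ℤ,
        b ^ n.natAbs * ‖fourierCoeff (fun x => Complex.exp (z * ψ x)) n‖ ^ 2)
        = ∑' n, wseq b (fun x => Complex.exp (z * ψ x)) n ^ 2 :=
      (tsum_congr fun n => (congrFun hsum_eq n).symm)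
    rw [hgoal_eq]
    have hexp : ∑' k : ℕ, (‖z‖ * (C * N)) ^ k / k.factorial = Real.exp (‖z‖ * (C * N)) := by
      rw [Real.exp_eq_exp_ℝ]
      exact (NormedSpace.expSeries_div_hasSum_exp (‖z‖ * (C * N))).tsum_eq
    calc Real.sqrt (∑' n, wseq b (fun x => Complex.exp (z * ψ x)) n ^ 2)
        ≤ ∑' k, ‖F k‖ := hmink.2
      _ ≤ ∑' k : ℕ, (‖z‖ * (C * N)) ^ k / k.factorial :=
          Summable.tsum_le_tsum hFle hFs (Real.summable_pow_div_factorial _)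
      _ = Real.exp (‖z‖ * (C * N)) := hexp
      _ = Real.exp (C * ‖z‖ * N) := by ring_nf
end KbAux
end

section
/- Let τ be a measure-preserving map of a probability space with transfer operator T̂ and let ψ be real-valued measurable. For t ∈ ℝ, λ ∈ ℂ with |λ| = 1, and f ∈ L¹: e^{itψ} f = λ · (f∘τ) almost everywhere if and only if T̂(e^{itψ} f) = λ f almost everywhere. -/
open MeasureTheory Complex

/-- Complex sign function. -/
noncomputable def csgn (z : ℂ) : ℂ := if z = 0 then 0 else z / ‖z‖

lemma csgn_meas : Measurable csgn := by
  unfold csgn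
  exact Measurable.ite (measurableSet_eq) measurable_const
    (measurable_id.div (Complex.measurable_ofReal.comp measurable_norm))

lemma csgn_norm_le (z : ℂ) : ‖csgn z‖ ≤ 1 := by
  unfold csgn
  split
  · simp
  · rename_i h
    rw [norm_div]
    simp only [Complex.norm_real, norm_norm]
    rw [div_le_one (by simpa [norm_pos_iff] using h)]

lemma mul_conj_csgn (z : ℂ) : z * (starRingEnd ℂ) (csgn z) = (‖z‖ : ℂ) := by
  unfold csgn
  split
  · simp_all
  · rename_i h
    rw [map_div₀, Complex.conj_ofReal, div_eq_mul_inv, ← mul_assoc, Complex.mul_conj,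
      Complex.normSq_eq_norm_sq]
    have h0 : (‖z‖ : ℂ) ≠ 0 := by
      simpa [Complex.ofReal_eq_zero] using (norm_ne_zero_iff.mpr h)
    push_cast
    field_simp

lemma norm_mul_csgn (z : ℂ) : (‖z‖ : ℂ) * csgn z = z := by
  unfold csgn
  split
  · simp_all
  · rename_i h
    rw [mul_div_assoc', mul_div_cancel_left₀]
    simpa [Complex.ofReal_eq_zero, norm_eq_zero] using h

lemma csgn_mul_conj_self (z : ℂ) (h : z ≠ 0) :
    csgn z * (starRingEnd ℂ) (csgn z) = 1 := by
  unfold csgn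
  rw [if_neg h, map_div₀, Complex.conj_ofReal, div_mul_div_comm, Complex.mul_conj,
    Complex.normSq_eq_norm_sq]
  have h0 : (‖z‖ : ℂ) ≠ 0 := by
    simpa [Complex.ofReal_eq_zero] using (norm_ne_zero_iff.mpr h)
  push_cast
  rw [sq]
  field_simp

lemma eq_re_of_norm_le' {z : ℂ} {c : ℝ} (h1 : ‖z‖ ≤ c) (h2 : z.re = c) : z = (c : ℂ) := by
  have habs : ‖z‖ ≤ c := h1
  have h3 : |z.re| ≤ ‖z‖ := Complex.abs_re_le_norm z
  have h4 : z.re ≤ |z.re| := le_abs_self z.re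
  have heq : ‖z‖ = c := le_antisymm habs (by linarith)
  have hsq : z.re * z.re + z.im * z.im = c * c := by
    have h5 := Complex.sq_norm z
    rw [heq, Complex.normSq_apply] at h5
    nlinarith [h5]
  rw [h2] at hsq
  have him : z.im = 0 := mul_self_eq_zero.mp (by linarith)
  exact Complex.ext (by simp [h2]) (by simp [him])

/-- Integration against a composition with a measure preserving map. -/
lemma integral_comp_mpres {X : Type*} [MeasurableSpace X] {E : Type*} [NormedAddCommGroup E]
    [NormedSpace ℝ E] {m : Measure X} {τ : X → X} (hτ : Measurable τ)
    (hpres : MeasurePreserving τ m m) (φ : X → E) (hφ : AEStronglyMeasurable φ m) :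
    ∫ x, φ (τ x) ∂m = ∫ x, φ x ∂m := by
  rw [← integral_map hτ.aemeasurable (by rwa [hpres.map_eq]), hpres.map_eq]

/-- Twisted eigenfunction equivalence: for a probability preserving `τ` with transfer
operator `P` (characterized by duality `∫ Pg·h = ∫ g·(h∘τ)`), real measurable `ψ`,
`t ∈ ℝ` and `|λ| = 1`:  `e^{itψ} f = λ f∘τ` a.e.  iff  `P(e^{itψ} f) = λ f` a.e. -/
theorem twisted_eigenfunction_equivalence
    {X : Type*} [MeasurableSpace X] (m : Measure X) [IsProbabilityMeasure m]
    (τ : X → X) (hτ : Measurable τ) (hpres : MeasurePreserving τ m m)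
    (P : (X → ℂ) → (X → ℂ))
    (hPint : ∀ g : X → ℂ, Integrable g m → Integrable (P g) m)
    (hP : ∀ g : X → ℂ, Integrable g m → ∀ h : X → ℂ, Measurable h →
      (∃ C : ℝ, ∀ x, ‖h x‖ ≤ C) →
      ∫ x, P g x * h x ∂m = ∫ x, g x * h (τ x) ∂m)
    (ψ : X → ℝ) (hψ : Measurable ψ) (t : ℝ) (lam : ℂ) (hlam : ‖lam‖ = 1)
    (f : X → ℂ) (hf : Integrable f m) :
    (∀ᵐ x ∂m, Complex.exp (Complex.I * (t * ψ x)) * f x = lam * f (τ x)) ↔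
      (P (fun x => Complex.exp (Complex.I * (t * ψ x)) * f x) =ᵐ[m]
        fun x => lam * f x) := by
  set e : X → ℂ := fun x => Complex.exp (Complex.I * (t * ψ x)) with he_def
  have he_meas : Measurable e := by rw [he_def]; fun_prop
  have he_norm : ∀ x, ‖e x‖ = 1 := by
    intro x
    rw [he_def]
    rw [Complex.norm_exp]
    simp [Complex.mul_re]
  have hg_int : Integrable (fun x => e x * f x) m :=
    hf.bdd_mul he_meas.aestronglyMeasurable (Filter.Eventually.of_forall fun x => (he_norm x).le)
  have hlam0 : lam ≠ 0 := by
    intro h; rw [h] at hlam; simp at hlam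
  have hlamconj : lam * (starRingEnd ℂ) lam = 1 := by
    rw [Complex.mul_conj, Complex.normSq_eq_norm_sq, hlam]
    norm_num
  have hconjmeas : Measurable fun z : ℂ => (starRingEnd ℂ) z :=
    Complex.continuous_conj.measurable
  constructor
  · -- forward direction
    intro hae
    apply ae_eq_of_forall_setIntegral_eq_of_sigmaFinite
    · intro s _ _; exact (hPint _ hg_int).integrableOn
    · intro s _ _; exact (hf.const_mul lam).integrableOn
    · intro s hs _
      have hind : Measurable (s.indicator (fun _ => (1 : ℂ))) := measurable_const.indicator hs
      have hbd : ∃ C : ℝ, ∀ x, ‖s.indicator (fun _ => (1 : ℂ)) x‖ ≤ C :=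
        ⟨1, fun x => by by_cases h : x ∈ s <;> simp [Set.indicator_of_mem,
          Set.indicator_of_notMem, h]⟩
      have l1 : ∀ u : X → ℂ, (∫ x, u x * s.indicator (fun _ => (1 : ℂ)) x ∂m)
          = ∫ x in s, u x ∂m := by
        intro u
        rw [← integral_indicator hs]
        congr 1; ext x
        by_cases h : x ∈ s <;> simp [h]
      have key := hP _ hg_int _ hind hbd
      rw [l1] at key
      rw [key]
      calc ∫ x, e x * f x * s.indicator (fun _ => (1 : ℂ)) (τ x) ∂m
          = ∫ x, (fun y => lam * f y * s.indicator (fun _ => (1 : ℂ)) y) (τ x) ∂m := by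
            apply integral_congr_ae
            filter_upwards [hae] with x hx
            simp only [he_def]
            rw [hx]
        _ = ∫ y, lam * f y * s.indicator (fun _ => (1 : ℂ)) y ∂m :=
            integral_comp_mpres hτ hpres _
              ((hf.aestronglyMeasurable.const_mul lam).mul hind.aestronglyMeasurable)
        _ = ∫ x in s, lam * f x ∂m := l1 _
  · -- reverse direction
    intro hPg
    have dual : ∀ h : X → ℂ, Measurable h → (∃ C : ℝ, ∀ x, ‖h x‖ ≤ C) →
        ∫ x, (e x * f x) * h (τ x) ∂m = lam * ∫ x, f x * h x ∂m := by
      intro h hm hb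
      calc ∫ x, (e x * f x) * h (τ x) ∂m
          = ∫ x, P (fun x => e x * f x) x * h x ∂m := (hP _ hg_int h hm hb).symm
        _ = ∫ x, lam * f x * h x ∂m := by
            apply integral_congr_ae
            filter_upwards [hPg] with x hx
            rw [hx]
        _ = lam * ∫ x, f x * h x ∂m := by
            simp_rw [mul_assoc]
            exact integral_const_mul lam _
    set f' := hf.aestronglyMeasurable.mk f with hf'def
    have hf'meas : Measurable f' := hf.aestronglyMeasurable.stronglyMeasurable_mk.measurable
    have hff' : f =ᵐ[m] f' := hf.aestronglyMeasurable.ae_eq_mk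
    have hf'int : Integrable f' m := hf.congr hff'
    have ha'meas : Measurable (fun x => ‖f' x‖) := hf'meas.norm
    have ha'int : Integrable (fun x => ‖f' x‖) m := hf'int.norm
    have hfτ : (fun x => f (τ x)) =ᵐ[m] fun x => f' (τ x) :=
      ae_eq_comp hτ.aemeasurable (by rwa [hpres.map_eq])
    -- Step A : the alignment identity
    set h₁ : X → ℂ := fun x => (starRingEnd ℂ) (lam * csgn (f' x)) with h₁def
    have h₁meas : Measurable h₁ := by
      rw [h₁def]
      exact hconjmeas.comp (measurable_const.mul (csgn_meas.comp hf'meas))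
    have h₁bd : ∀ y, ‖h₁ y‖ ≤ 1 := by
      intro y
      simp only [h₁def]
      rw [(by simp : ‖(starRingEnd ℂ) (lam * csgn (f' y))‖ = ‖lam * csgn (f' y)‖),
        norm_mul, hlam, one_mul]
      exact csgn_norm_le _
    have hE2 : ∫ x, (e x * f x) * h₁ (τ x) ∂m = ∫ x, ((‖f' x‖ : ℝ) : ℂ) ∂m := by
      rw [dual h₁ h₁meas ⟨1, h₁bd⟩]
      have hcg : (fun x => f x * h₁ x) =ᵐ[m]
          fun x => (starRingEnd ℂ) lam * ((‖f' x‖ : ℝ) : ℂ) := by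
        filter_upwards [hff'] with x hx
        simp only [h₁def]
        rw [hx, map_mul,
          (by ring : f' x * ((starRingEnd ℂ) lam * (starRingEnd ℂ) (csgn (f' x)))
            = (f' x * (starRingEnd ℂ) (csgn (f' x))) * (starRingEnd ℂ) lam),
          mul_conj_csgn, mul_comm]
      rw [integral_congr_ae hcg, integral_const_mul, ← mul_assoc, hlamconj, one_mul]
    have hgh_int : Integrable (fun x => (e x * f x) * h₁ (τ x)) m := by
      have hb := hg_int.bdd_mul ((h₁meas.comp hτ).aestronglyMeasurable)
        (Filter.Eventually.of_forall fun x => h₁bd (τ x))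
      apply hb.congr
      filter_upwards with x
      simp only [Function.comp_apply]
      ring
    have hnormle : ∀ x, ‖(e x * f x) * h₁ (τ x)‖ ≤ ‖f x‖ := by
      intro x
      rw [norm_mul, norm_mul, he_norm, one_mul]
      calc ‖f x‖ * ‖h₁ (τ x)‖ ≤ ‖f x‖ * 1 :=
            mul_le_mul_of_nonneg_left (h₁bd (τ x)) (norm_nonneg _)
        _ = ‖f x‖ := mul_one _
    have hr_ae : ∀ᵐ x ∂m, ‖f x‖ - ((e x * f x) * h₁ (τ x)).re = 0 := by
      have hre_int : Integrable (fun x => ((e x * f x) * h₁ (τ x)).re) m := hgh_int.re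
      have hint0 : ∫ x, (‖f x‖ - ((e x * f x) * h₁ (τ x)).re) ∂m = 0 := by
        rw [integral_sub hf.norm hre_int]
        have hre := integral_re (𝕜 := ℂ) hgh_int
        simp only [RCLike.re_to_complex] at hre
        have h1 : ∫ x, ((e x * f x) * h₁ (τ x)).re ∂m = ∫ x, ‖f x‖ ∂m := by
          rw [hre, hE2,
            show (∫ x, ((‖f' x‖ : ℝ) : ℂ) ∂m) = ((∫ x, ‖f' x‖ ∂m : ℝ) : ℂ) from integral_ofReal]
          simp only [Complex.ofReal_re]
          exact (integral_congr_ae (hff'.mono fun x hx => by rw [hx])).symm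
        rw [h1, sub_self]
      have hnn : (0 : X → ℝ) ≤ᵐ[m] fun x => ‖f x‖ - ((e x * f x) * h₁ (τ x)).re := by
        filter_upwards with x
        have h2 : ((e x * f x) * h₁ (τ x)).re ≤ ‖(e x * f x) * h₁ (τ x)‖ :=
          Complex.re_le_norm _
        have h3 := hnormle x
        simp only [Pi.zero_apply]
        linarith
      have := (integral_eq_zero_iff_of_nonneg_ae hnn (hf.norm.sub hre_int)).mp hint0
      filter_upwards [this] with x hx
      exact hx
    have key1 : ∀ᵐ x ∂m, e x * f x = (‖f x‖ : ℂ) * (lam * csgn (f' (τ x))) := by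
      filter_upwards [hr_ae] with x hx
      have hre : ((e x * f x) * h₁ (τ x)).re = ‖f x‖ := by linarith
      have heq : (e x * f x) * h₁ (τ x) = ((‖f x‖ : ℝ) : ℂ) :=
        eq_re_of_norm_le' (hnormle x) hre
      by_cases hz : f' (τ x) = 0
      · have hh1 : h₁ (τ x) = 0 := by
          simp only [h₁def]
          simp [hz, csgn]
        rw [hh1, mul_zero] at heq
        have hfx : ‖f x‖ = 0 := by exact_mod_cast heq.symm
        simp [norm_eq_zero.mp hfx]
      · have hw : h₁ (τ x) * (lam * csgn (f' (τ x))) = 1 := by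
          simp only [h₁def]
          rw [map_mul]
          calc (starRingEnd ℂ) lam * (starRingEnd ℂ) (csgn (f' (τ x)))
              * (lam * csgn (f' (τ x)))
              = (lam * (starRingEnd ℂ) lam)
                * (csgn (f' (τ x)) * (starRingEnd ℂ) (csgn (f' (τ x)))) := by ring
            _ = 1 := by rw [hlamconj, csgn_mul_conj_self _ hz, one_mul]
        calc e x * f x = (e x * f x) * (h₁ (τ x) * (lam * csgn (f' (τ x)))) := by
              rw [hw, mul_one]
          _ = ((e x * f x) * h₁ (τ x)) * (lam * csgn (f' (τ x))) := by ring
          _ = (‖f x‖ : ℂ) * (lam * csgn (f' (τ x))) := by rw [heq]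
    -- Step B : set integral identities
    have hsetint : ∀ A : Set X, MeasurableSet A →
        ∫ x in τ ⁻¹' A, ‖f' x‖ ∂m = ∫ x in A, ‖f' x‖ ∂m := by
      intro A hA
      set h₂ : X → ℂ := fun x => (starRingEnd ℂ) (csgn (f' x))
        * A.indicator (fun _ => (1 : ℂ)) x with h₂def
      have h₂meas : Measurable h₂ := by
        rw [h₂def]
        exact (hconjmeas.comp (csgn_meas.comp hf'meas)).mul (measurable_const.indicator hA)
      have h₂bd : ∀ y, ‖h₂ y‖ ≤ 1 := by
        intro y
        simp only [h₂def]
        rw [norm_mul, (by simp : ‖(starRingEnd ℂ) (csgn (f' y))‖ = ‖csgn (f' y)‖)]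
        by_cases h : y ∈ A
        · rw [Set.indicator_of_mem h, norm_one, mul_one]
          exact csgn_norm_le _
        · rw [Set.indicator_of_notMem h]
          simp
      have hd := dual h₂ h₂meas ⟨1, h₂bd⟩
      have hLHS : ∫ x, (e x * f x) * h₂ (τ x) ∂m
          = lam * ∫ x in τ ⁻¹' A, ((‖f x‖ : ℝ) : ℂ) ∂m := by
        rw [← integral_const_mul, ← integral_indicator (hA.preimage hτ)]
        apply integral_congr_ae
        filter_upwards [key1] with x hx
        simp only [h₂def]
        by_cases hmem : τ x ∈ A
        · rw [Set.indicator_of_mem hmem,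
            Set.indicator_of_mem (show x ∈ τ ⁻¹' A from hmem), mul_one]
          by_cases hz : f' (τ x) = 0
          · have hf0 : f x = 0 := by
              have he0 : e x ≠ 0 := Complex.exp_ne_zero _
              have hcs : csgn (f' (τ x)) = 0 := by simp [csgn, hz]
              rw [hcs, mul_zero, mul_zero] at hx
              exact (mul_eq_zero.mp hx).resolve_left he0
            simp [hf0]
          · rw [hx]
            calc (‖f x‖ : ℂ) * (lam * csgn (f' (τ x))) * (starRingEnd ℂ) (csgn (f' (τ x)))
                = lam * (‖f x‖ : ℂ)
                  * (csgn (f' (τ x)) * (starRingEnd ℂ) (csgn (f' (τ x)))) := by ring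
              _ = lam * (‖f x‖ : ℂ) := by rw [csgn_mul_conj_self _ hz, mul_one]
        · rw [Set.indicator_of_notMem hmem,
            Set.indicator_of_notMem (show x ∉ τ ⁻¹' A from hmem)]
          simp
      have hRHS : ∫ x, f x * h₂ x ∂m = ∫ x in A, ((‖f' x‖ : ℝ) : ℂ) ∂m := by
        rw [← integral_indicator hA]
        apply integral_congr_ae
        filter_upwards [hff'] with x hx
        simp only [h₂def]
        by_cases hmem : x ∈ A
        · rw [Set.indicator_of_mem hmem, Set.indicator_of_mem hmem, mul_one, hx,
            mul_conj_csgn]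
        · rw [Set.indicator_of_notMem hmem, Set.indicator_of_notMem hmem]
          simp
      rw [hLHS, hRHS] at hd
      have hd2 := mul_left_cancel₀ hlam0 hd
      rw [show (∫ x in τ ⁻¹' A, ((‖f x‖ : ℝ) : ℂ) ∂m)
          = ((∫ x in τ ⁻¹' A, ‖f x‖ ∂m : ℝ) : ℂ) from integral_ofReal,
        show (∫ x in A, ((‖f' x‖ : ℝ) : ℂ) ∂m)
          = ((∫ x in A, ‖f' x‖ ∂m : ℝ) : ℂ) from integral_ofReal] at hd2
      have hd3 : ∫ x in τ ⁻¹' A, ‖f x‖ ∂m = ∫ x in A, ‖f' x‖ ∂m := by exact_mod_cast hd2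
      rw [← hd3]
      apply integral_congr_ae
      apply ae_restrict_of_ae
      filter_upwards [hff'] with x hx
      rw [hx]
    have hsetint2 : ∀ A : Set X, MeasurableSet A →
        ∫ x in τ ⁻¹' A, ‖f' (τ x)‖ ∂m = ∫ x in A, ‖f' x‖ ∂m := by
      intro A hA
      have hcomp : ∫ x, (A.indicator (fun y => ‖f' y‖)) (τ x) ∂m
          = ∫ x, A.indicator (fun y => ‖f' y‖) x ∂m :=
        integral_comp_mpres hτ hpres _ (ha'meas.indicator hA).aestronglyMeasurable
      rw [integral_indicator hA] at hcomp
      calc ∫ x in τ ⁻¹' A, ‖f' (τ x)‖ ∂m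
          = ∫ x, (τ ⁻¹' A).indicator (fun y => ‖f' (τ y)‖) x ∂m :=
            (integral_indicator (hA.preimage hτ)).symm
        _ = ∫ x, (A.indicator (fun y => ‖f' y‖)) (τ x) ∂m := by
            apply integral_congr_ae
            filter_upwards with x
            by_cases hx : τ x ∈ A <;> simp [Set.indicator, hx]
        _ = ∫ x in A, ‖f' x‖ ∂m := hcomp
    -- a.e. equality of ‖f'‖ and ‖f'‖ ∘ τ
    have hab : ∀ᵐ x ∂m, ‖f' x‖ = ‖f' (τ x)‖ := by
      have hnull : ∀ q : ℚ, m ({x | ‖f' x‖ ≤ (q : ℝ)} \ τ ⁻¹' {x | ‖f' x‖ ≤ (q : ℝ)}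
          ∪ τ ⁻¹' {x | ‖f' x‖ ≤ (q : ℝ)} \ {x | ‖f' x‖ ≤ (q : ℝ)}) = 0 := by
        intro q
        set r : ℝ := (q : ℝ) with hrdef
        set A : Set X := {x | ‖f' x‖ ≤ r} with hAdef
        have hA : MeasurableSet A := ha'meas measurableSet_Iic
        set B : Set X := τ ⁻¹' A with hBdef
        have hB : MeasurableSet B := hA.preimage hτ
        have hmAB : m A = m B := (hpres.measure_preimage hA.nullMeasurableSet).symm
        have hInt : ∀ S : Set X, IntegrableOn (fun x => ‖f' x‖) S m :=
          fun S => ha'int.integrableOn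
        have hsplit : ∀ (S T : Set X), MeasurableSet S → MeasurableSet T →
            ∫ x in S, ‖f' x‖ ∂m
              = ∫ x in S \ T, ‖f' x‖ ∂m + ∫ x in S ∩ T, ‖f' x‖ ∂m := by
          intro S T hS hT
          rw [← setIntegral_union Set.disjoint_sdiff_inter (hS.inter hT) (hInt _) (hInt _),
            Set.diff_union_inter]
        have hBA : ∫ x in B, ‖f' x‖ ∂m = ∫ x in A, ‖f' x‖ ∂m := hsetint A hA
        have e1 := hsplit B A hB hA
        have e2 := hsplit A B hA hB
        rw [Set.inter_comm A B] at e2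
        have hdiffint : ∫ x in B \ A, ‖f' x‖ ∂m = ∫ x in A \ B, ‖f' x‖ ∂m := by linarith
        have hm1 := measure_diff_add_inter (μ := m) B hA
        have hm2 := measure_diff_add_inter (μ := m) A hB
        rw [Set.inter_comm A B] at hm2
        have hfin : m (B ∩ A) ≠ ⊤ := (measure_lt_top m _).ne
        have hmdiff : m (B \ A) = m (A \ B) := by
          have hcan : m (B \ A) + m (B ∩ A) = m (A \ B) + m (B ∩ A) := by
            rw [hm1, hm2, hmAB]
          exact (ENNReal.add_left_inj hfin).mp hcan
        have hIconst : ∀ S : Set X, MeasurableSet S →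
            ∫ x in S, (‖f' x‖ - r) ∂m = ∫ x in S, ‖f' x‖ ∂m - r * (m S).toReal := by
          intro S hS
          rw [integral_sub (hInt S) (integrableOn_const (measure_lt_top m S).ne),
            setIntegral_const]
          simp [mul_comm, Measure.real]
        have hI1 : ∫ x in B \ A, (‖f' x‖ - r) ∂m = ∫ x in A \ B, (‖f' x‖ - r) ∂m := by
          rw [hIconst _ (hB.diff hA), hIconst _ (hA.diff hB), hdiffint, hmdiff]
        have hI2 : ∫ x in A \ B, (‖f' x‖ - r) ∂m ≤ 0 := by
          apply setIntegral_nonpos (hA.diff hB)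
          intro x hx
          have hxa : ‖f' x‖ ≤ r := hx.1
          linarith
        have hI1nn : 0 ≤ ∫ x in B \ A, (‖f' x‖ - r) ∂m := by
          apply setIntegral_nonneg (hB.diff hA)
          intro x hx
          have hxa : ¬ ‖f' x‖ ≤ r := hx.2
          linarith
        have hI10 : ∫ x in B \ A, (‖f' x‖ - r) ∂m = 0 := le_antisymm (hI1 ▸ hI2) hI1nn
        have hBAnull : m (B \ A) = 0 := by
          have hzero : (fun x => ‖f' x‖ - r) =ᵐ[m.restrict (B \ A)] 0 := by
            apply (integral_eq_zero_iff_of_nonneg_ae ?_ ((hInt _).sub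
              (integrableOn_const (measure_lt_top m _).ne))).mp hI10
            have hgoal : ∀ᵐ x ∂m.restrict (B \ A), 0 ≤ ‖f' x‖ - r := by
              rw [ae_restrict_iff' (hB.diff hA)]
              filter_upwards with x hx
              have hxa : ¬ ‖f' x‖ ≤ r := hx.2
              linarith
            exact hgoal.mono fun x hx => by simpa using hx
          have hzero' : ∀ᵐ x ∂m.restrict (B \ A), ‖f' x‖ - r = 0 :=
            hzero.mono fun x hx => by simpa using hx
          rw [ae_restrict_iff' (hB.diff hA)] at hzero'
          rw [measure_eq_zero_iff_ae_notMem]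
          filter_upwards [hzero'] with x hx hmem
          have h1 := hx hmem
          have h2 : ¬ ‖f' x‖ ≤ r := hmem.2
          exact h2 (le_of_eq (by linarith))
        have hABnull : m (A \ B) = 0 := by rw [← hmdiff]; exact hBAnull
        exact measure_union_null hABnull hBAnull
      have hsub : {x | ¬ ‖f' x‖ = ‖f' (τ x)‖} ⊆ ⋃ q : ℚ,
          ({x | ‖f' x‖ ≤ (q : ℝ)} \ τ ⁻¹' {x | ‖f' x‖ ≤ (q : ℝ)}
            ∪ τ ⁻¹' {x | ‖f' x‖ ≤ (q : ℝ)} \ {x | ‖f' x‖ ≤ (q : ℝ)}) := by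
        intro x hx
        simp only [Set.mem_setOf_eq] at hx
        rcases lt_or_gt_of_ne hx with hlt | hgt
        · obtain ⟨q, hq1, hq2⟩ := exists_rat_btwn hlt
          refine Set.mem_iUnion.mpr ⟨q, Or.inl ⟨le_of_lt hq1, ?_⟩⟩
          simp only [Set.mem_preimage, Set.mem_setOf_eq, not_le]
          exact hq2
        · obtain ⟨q, hq1, hq2⟩ := exists_rat_btwn hgt
          refine Set.mem_iUnion.mpr ⟨q, Or.inr ⟨?_, ?_⟩⟩
          · simp only [Set.mem_preimage, Set.mem_setOf_eq]
            exact le_of_lt hq1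
          · simp only [Set.mem_setOf_eq, not_le]
            exact hq2
      have hz : m {x | ¬ ‖f' x‖ = ‖f' (τ x)‖} = 0 :=
        measure_mono_null hsub (measure_iUnion_null hnull)
      exact hz
    -- assemble
    filter_upwards [key1, hab, hff', hfτ] with x h1 h2 h3 h4
    show e x * f x = lam * f (τ x)
    rw [h1]
    have hn : (‖f x‖ : ℂ) = ((‖f' (τ x)‖ : ℝ) : ℂ) := by
      rw [h3]
      exact_mod_cast congrArg (fun y : ℝ => (y : ℂ)) h2
    rw [hn, ← mul_assoc, mul_comm ((‖f' (τ x)‖ : ℂ)) lam, mul_assoc, norm_mul_csgn, ← h4]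
end
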